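/- For coprime positive integers a and b, the classical Dedekind sums satisfy the reciprocity law s(a;b) + s(b;a) = -1/4 + (a² + b² + 1)/(12ab). -/

import Mathlib

/-!
Put `x = π μ / a` and `y = π ν / b` with `0 < μ < a`, `0 < ν < b`. By coprimality none of `x`, `y`,
`x + y` lies in `π ℤ`, so the addition formula `cot (x + y) (cot x + cot y) = cot x cot y - 1` holds
at every point of the grid. Summed over the grid, the right side is `-(a - 1)(b - 1)` because
`∑ μ, cot (π μ / a) = 0`. On the left, the multiplication formula
`∑ ν < b, cot (x + π ν / b) = b cot (b x)` turns the inner sums into `4 a b s(b; a)` and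
`4 a b s(a; b)`, up to the sums `∑ μ, cot² (π μ / a) = (a - 1)(a - 2) / 3`. These come out of the
same addition formula summed over `0 < j, k < n` with `j + k ≠ n`.
-/

open Finset Real

/-- The classical Dedekind sum `s(a;b)` defined by the cotangent sum. -/
noncomputable def dedekindS (a : ℤ) (b : ℕ) : ℝ :=
  (1 / (4 * (b : ℝ))) * ∑ ν ∈ Finset.Ico 1 b,
    Real.cot (Real.pi * a * ν / b) * Real.cot (Real.pi * ν / b)

namespace Real

@[simp]
theorem cot_zero : cot 0 = 0 := by
  rw [cot_eq_cos_div_sin, sin_zero, div_zero]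

theorem cot_add_pi (x : ℝ) : cot (x + π) = cot x := by
  rw [cot_eq_cos_div_sin, cot_eq_cos_div_sin, sin_add_pi, cos_add_pi, neg_div_neg_eq]

theorem cot_pi_sub (x : ℝ) : cot (π - x) = -cot x := by
  rw [cot_eq_cos_div_sin, cot_eq_cos_div_sin, sin_pi_sub, cos_pi_sub, neg_div]

theorem cot_add_mul_cot_add_cot {x y : ℝ} (hx : sin x ≠ 0) (hy : sin y ≠ 0)
    (hxy : sin (x + y) ≠ 0) : cot (x + y) * (cot x + cot y) = cot x * cot y - 1 := by
  simp only [cot_eq_cos_div_sin]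
  field_simp
  rw [sin_add, cos_add]
  ring

theorem sin_pi_mul_div_ne_zero {p q : ℕ} (hq : q ≠ 0) (h : ¬q ∣ p) : sin (π * p / q) ≠ 0 := by
  rw [Ne, sin_eq_zero_iff]
  rintro ⟨k, hk⟩
  have hkq : (k * q : ℤ) = p := by
    have : (k : ℝ) * q = p := by field_simp at hk; linarith
    exact_mod_cast this
  exact h (Int.natCast_dvd_natCast.mp ⟨k, by rw [← hkq, mul_comm]⟩)

end Real

section CotPiMulDiv

variable {n : ℕ}

theorem cot_pi_mul_add_self_div (hn : n ≠ 0) (j : ℕ) :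
    cot (π * ↑(j + n) / n) = cot (π * j / n) := by
  rw [← cot_add_pi (π * j / n)]
  congr 1
  push_cast
  field_simp

theorem cot_pi_mul_self_sub_div (hn : n ≠ 0) {j : ℕ} (hj : j ≤ n) :
    cot (π * ↑(n - j) / n) = -cot (π * j / n) := by
  rw [← cot_pi_sub]
  congr 1
  push_cast [hj]
  field_simp

theorem cot_pi_mul_self_div (hn : n ≠ 0) : cot (π * n / n) = 0 := by
  rw [mul_div_cancel_right₀ π (Nat.cast_ne_zero.mpr hn), cot_eq_cos_div_sin, sin_pi, div_zero]

theorem sum_range_cot_pi_mul_div (n : ℕ) : ∑ j ∈ range n, cot (π * j / n) = 0 := by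
  rcases eq_or_ne n 0 with rfl | hn
  · simp
  have hsum : ∑ j ∈ range (n + 1), cot (π * j / n) = 0 := by
    have h := sum_range_reflect (fun j ↦ cot (π * j / n)) (n + 1)
    simp only [add_tsub_cancel_right] at h
    rw [sum_congr rfl fun j hj ↦ cot_pi_mul_self_sub_div hn (Nat.lt_succ_iff.mp (mem_range.mp hj)),
      sum_neg_distrib] at h
    linarith
  rwa [sum_range_succ, cot_pi_mul_self_div hn, add_zero] at hsum

theorem sum_Ico_cot_pi_mul_div (n : ℕ) : ∑ j ∈ Ico 1 n, cot (π * j / n) = 0 := by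
  rcases n.eq_zero_or_pos with rfl | hn
  · simp
  have h := sum_range_cot_pi_mul_div n
  rwa [range_eq_Ico, sum_eq_sum_Ico_succ_bot hn, Nat.cast_zero, mul_zero, zero_div, cot_zero,
    zero_add] at h

theorem sum_range_cot_pi_mul_add_div (n j : ℕ) :
    ∑ k ∈ range n, cot (π * ↑(j + k) / n) = 0 := by
  rcases eq_or_ne n 0 with rfl | hn
  · simp
  induction j with
  | zero => simpa using sum_range_cot_pi_mul_div n
  | succ j ih =>
    have h := sum_range_succ (fun k ↦ cot (π * ↑(j + k) / n)) n
    rw [sum_range_succ', cot_pi_mul_add_self_div hn, ih] at h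
    simpa [add_assoc, add_comm 1] using h

theorem sum_Ico_cot_pi_mul_add_div (n j : ℕ) (hn : n ≠ 0) :
    ∑ k ∈ Ico 1 n, cot (π * ↑(j + k) / n) = -cot (π * j / n) := by
  have h := sum_range_cot_pi_mul_add_div n j
  rw [range_eq_Ico, sum_eq_sum_Ico_succ_bot (Nat.pos_of_ne_zero hn), add_zero] at h
  linarith

theorem sum_Ico_cot_add_mul_cot_add_cot_sub_cot_mul_cot (hn : n ≠ 0) {j : ℕ} (hj : j ∈ Ico 1 n) :
    ∑ k ∈ Ico 1 n, (cot (π * ↑(j + k) / n) * (cot (π * j / n) + cot (π * k / n)) -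
      cot (π * j / n) * cot (π * k / n)) = cot (π * j / n) ^ 2 - (n - 2) := by
  have hsin {k : ℕ} (hk : k ∈ Ico 1 n) : sin (π * k / n) ≠ 0 := by
    rw [mem_Ico] at hk
    exact sin_pi_mul_div_ne_zero hn (Nat.not_dvd_of_pos_of_lt hk.1 hk.2)
  have hj' := mem_Ico.mp hj
  have hmem : n - j ∈ Ico 1 n := mem_Ico.mpr ⟨by omega, by omega⟩
  -- On the diagonal `j + k = n` the addition formula is replaced by the convention `cot π = 0`.
  have hdiag : cot (π * ↑(j + (n - j)) / n) * (cot (π * j / n) + cot (π * ↑(n - j) / n)) -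
      cot (π * j / n) * cot (π * ↑(n - j) / n) = cot (π * j / n) ^ 2 := by
    rw [Nat.add_sub_cancel' hj'.2.le, cot_pi_mul_self_div hn, cot_pi_mul_self_sub_div hn hj'.2.le]
    ring
  have hoff : ∀ k ∈ (Ico 1 n).erase (n - j), cot (π * ↑(j + k) / n) *
      (cot (π * j / n) + cot (π * k / n)) - cot (π * j / n) * cot (π * k / n) = -1 := by
    intro k hk
    obtain ⟨hkj, hk⟩ := mem_erase.mp hk
    have hk' := mem_Ico.mp hk
    have hsum : sin (π * ↑(j + k) / n) ≠ 0 :=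
      sin_pi_mul_div_ne_zero hn fun ⟨m, hm⟩ ↦ by
        rcases m with _ | _ | m <;> [omega; omega; nlinarith]
    rw [show π * ↑(j + k) / n = π * j / n + π * k / n by push_cast; ring] at hsum ⊢
    rw [cot_add_mul_cot_add_cot (hsin hj) (hsin hk) hsum]
    ring
  rw [← add_sum_erase _ _ hmem, hdiag, sum_congr rfl hoff, sum_const, card_erase_of_mem hmem,
    Nat.card_Ico, nsmul_eq_mul, Nat.cast_sub (by omega : 1 ≤ n - 1),
    Nat.cast_sub (by omega : 1 ≤ n)]
  push_cast
  ring

theorem sum_Ico_cot_sq_pi_mul_div (hn : n ≠ 0) :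
    ∑ j ∈ Ico 1 n, cot (π * j / n) ^ 2 = ((n : ℝ) - 1) * (n - 2) / 3 := by
  have hrows : ∑ j ∈ Ico 1 n, ∑ k ∈ Ico 1 n, cot (π * ↑(j + k) / n) * cot (π * j / n) =
      -∑ j ∈ Ico 1 n, cot (π * j / n) ^ 2 := by
    simp only [← sum_mul, sum_Ico_cot_pi_mul_add_div n _ hn, neg_mul, ← sq, sum_neg_distrib]
  have hcols : ∑ j ∈ Ico 1 n, ∑ k ∈ Ico 1 n, cot (π * ↑(j + k) / n) * cot (π * k / n) =
      -∑ j ∈ Ico 1 n, cot (π * j / n) ^ 2 := by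
    rw [sum_comm, ← hrows]
    simp only [add_comm]
  have htotal := sum_congr rfl fun j hj ↦ sum_Ico_cot_add_mul_cot_add_cot_sub_cot_mul_cot hn hj
  simp only [sum_sub_distrib, mul_add, sum_add_distrib, ← sum_mul_sum, hrows, hcols,
    sum_Ico_cot_pi_mul_div, sum_const, Nat.card_Ico, nsmul_eq_mul,
    Nat.cast_sub (Nat.one_le_iff_ne_zero.mpr hn)] at htotal
  push_cast at htotal
  linarith

end CotPiMulDiv

theorem IsPrimitiveRoot.sum_inv_mul_pow_sub_one {K : Type*} [Field K] {ζ z : K} {n : ℕ}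
    (hζ : IsPrimitiveRoot ζ n) (hz : z ^ n ≠ 1) :
    ∑ j ∈ range n, (z * ζ ^ j - 1)⁻¹ = n / (z ^ n - 1) := by
  have hzn : z ^ n - 1 ≠ 0 := sub_ne_zero.mpr hz
  have hterm (j : ℕ) : (z * ζ ^ j - 1)⁻¹ = (∑ m ∈ range n, z ^ m * (ζ ^ m) ^ j) / (z ^ n - 1) := by
    have hgeom := geom_sum_mul (z * ζ ^ j) n
    rw [mul_pow, ← pow_mul, mul_comm j, pow_mul, hζ.pow_eq_one, one_pow, mul_one] at hgeom
    have hne : z * ζ ^ j - 1 ≠ 0 := by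
      rintro h0
      rw [h0, mul_zero] at hgeom
      exact hzn hgeom.symm
    rw [eq_div_iff hzn, ← hgeom, mul_comm _ (z * ζ ^ j - 1), ← mul_assoc, inv_mul_cancel₀ hne,
      one_mul]
    refine sum_congr rfl fun m _ ↦ ?_
    rw [mul_pow, ← pow_mul, ← pow_mul, mul_comm j]
  have horth : ∀ m ∈ range n, ∑ j ∈ range n, (ζ ^ m) ^ j = if m = 0 then (n : K) else 0 := by
    intro m hm
    split_ifs with hm0
    · simp [hm0]
    · rw [geom_sum_eq (hζ.pow_ne_one_of_pos_of_lt hm0 (mem_range.mp hm)), ← pow_mul, mul_comm,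
        pow_mul, hζ.pow_eq_one, one_pow, sub_self, zero_div]
  have hn : 0 < n := Nat.pos_of_ne_zero fun h0 ↦ hz (by rw [h0, pow_zero])
  rw [sum_congr rfl fun j _ ↦ hterm j, ← sum_div, sum_comm]
  simp only [← mul_sum]
  rw [sum_congr rfl fun m hm ↦ by rw [horth m hm], sum_eq_single_of_mem 0 (mem_range.mpr hn)]
  · simp
  · intro m _ hm0
    rw [if_neg hm0, mul_zero]

namespace Complex

theorem exp_two_mul_I_mul_ne_one {z : ℂ} (hz : sin z ≠ 0) : exp (2 * I * z) ≠ 1 := by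
  rw [Ne, exp_eq_one_iff]
  rintro ⟨k, hk⟩
  refine hz (sin_eq_zero_iff.mpr ⟨k, mul_left_cancel₀ (mul_ne_zero two_ne_zero I_ne_zero) ?_⟩)
  rw [hk]
  ring

theorem cot_eq_I_add_div {z : ℂ} (hz : exp (2 * I * z) ≠ 1) :
    cot z = I + 2 * I / (exp (2 * I * z) - 1) := by
  have h₁ : exp (2 * I * z) - 1 ≠ 0 := sub_ne_zero.mpr hz
  have h₂ : 1 - exp (2 * I * z) ≠ 0 := sub_ne_zero.mpr hz.symm
  rw [cot_eq_exp_ratio]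
  field_simp
  linear_combination (exp (2 * I * z) ^ 2 - 1) * I_sq

theorem sum_range_cot_add_pi_mul_div {n : ℕ} {z : ℂ} (h : sin (n * z) ≠ 0) :
    ∑ j ∈ range n, cot (z + π * j / n) = n * cot (n * z) := by
  have hn : n ≠ 0 := by rintro rfl; simp at h
  have hζ := isPrimitiveRoot_exp n hn
  have hwn : exp (2 * I * (n * z)) = exp (2 * I * z) ^ n := by
    rw [← exp_nat_mul]; ring_nf
  have hexp (j : ℕ) :
      exp (2 * I * (z + π * j / n)) = exp (2 * I * z) * exp (2 * π * I / n) ^ j := by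
    rw [← exp_nat_mul, ← exp_add]
    field_simp
  have hne : exp (2 * I * z) ^ n ≠ 1 := hwn ▸ exp_two_mul_I_mul_ne_one h
  have hne' (j : ℕ) : exp (2 * I * (z + π * j / n)) ≠ 1 := fun h1 ↦ hne <| by
    rw [hexp] at h1
    calc exp (2 * I * z) ^ n = (exp (2 * I * z) * exp (2 * π * I / n) ^ j) ^ n := by
          rw [mul_pow, ← pow_mul, mul_comm j, pow_mul, hζ.pow_eq_one, one_pow, mul_one]
      _ = 1 := by rw [h1, one_pow]
  rw [sum_congr rfl fun j _ ↦ by rw [cot_eq_I_add_div (hne' j), hexp, div_eq_mul_inv],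
    sum_add_distrib, ← mul_sum, hζ.sum_inv_mul_pow_sub_one hne, cot_eq_I_add_div (hwn ▸ hne), hwn]
  simp only [div_eq_mul_inv, sum_const, card_range, nsmul_eq_mul]
  ring

end Complex

theorem Real.sum_range_cot_add_pi_mul_div {n : ℕ} {x : ℝ} (h : sin (n * x) ≠ 0) :
    ∑ j ∈ range n, cot (x + π * j / n) = n * cot (n * x) := by
  apply Complex.ofReal_injective
  push_cast [Complex.ofReal_cot]
  exact Complex.sum_range_cot_add_pi_mul_div (by exact_mod_cast h)

theorem Real.sum_Ico_cot_add_pi_mul_div {n : ℕ} {x : ℝ} (h : sin (n * x) ≠ 0) :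
    ∑ j ∈ Ico 1 n, cot (x + π * j / n) = n * cot (n * x) - cot x := by
  have hn : 0 < n := Nat.pos_of_ne_zero (by rintro rfl; simp at h)
  have hsum := Real.sum_range_cot_add_pi_mul_div h
  rw [range_eq_Ico, sum_eq_sum_Ico_succ_bot hn, Nat.cast_zero, mul_zero, zero_div, add_zero] at hsum
  linarith

theorem sum_Ico_cot_mul_sum_Ico_cot_add {a b : ℕ} (ha : a ≠ 0) (hab : a.Coprime b) :
    ∑ μ ∈ Ico 1 a, cot (π * μ / a) * ∑ ν ∈ Ico 1 b, cot (π * μ / a + π * ν / b) =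
      4 * a * b * dedekindS b a - ((a : ℝ) - 1) * (a - 2) / 3 := by
  have hinner : ∀ μ ∈ Ico 1 a,
      ∑ ν ∈ Ico 1 b, cot (π * μ / a + π * ν / b) = b * cot (π * b * μ / a) - cot (π * μ / a) := by
    intro μ hμ
    rw [mem_Ico] at hμ
    rw [show π * b * μ / a = b * (π * μ / a) by ring]
    refine Real.sum_Ico_cot_add_pi_mul_div ?_
    rw [show (b : ℝ) * (π * μ / a) = π * ↑(b * μ) / a by push_cast; ring]
    exact sin_pi_mul_div_ne_zero ha fun h ↦
      Nat.not_dvd_of_pos_of_lt hμ.1 hμ.2 (hab.dvd_of_dvd_mul_left h)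
  have hsplit : ∑ μ ∈ Ico 1 a, cot (π * μ / a) * (b * cot (π * b * μ / a) - cot (π * μ / a)) =
      b * ∑ μ ∈ Ico 1 a, cot (π * b * μ / a) * cot (π * μ / a) -
        ∑ μ ∈ Ico 1 a, cot (π * μ / a) ^ 2 := by
    rw [mul_sum, ← sum_sub_distrib]
    exact sum_congr rfl fun _ _ ↦ by ring
  rw [sum_congr rfl fun μ hμ ↦ by rw [hinner μ hμ], hsplit, sum_Ico_cot_sq_pi_mul_div ha, dedekindS]
  push_cast
  field_simp

theorem sin_pi_mul_div_add_pi_mul_div_ne_zero {a b μ : ℕ} (ha : a ≠ 0) (hb : b ≠ 0)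
    (hab : a.Coprime b) (hμ : μ ∈ Ico 1 a) (ν : ℕ) : sin (π * μ / a + π * ν / b) ≠ 0 := by
  rw [mem_Ico] at hμ
  rw [show π * μ / a + π * ν / b = π * ↑(μ * b + ν * a) / ↑(a * b) by push_cast; field_simp]
  refine sin_pi_mul_div_ne_zero (mul_ne_zero ha hb) fun hdvd ↦ ?_
  have hμb : a ∣ μ * b := (Nat.dvd_add_left (dvd_mul_left a ν)).mp ((dvd_mul_right a b).trans hdvd)
  exact Nat.not_dvd_of_pos_of_lt hμ.1 hμ.2 (hab.dvd_of_dvd_mul_right hμb)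

theorem four_mul_mul_dedekindS_add {a b : ℕ} (ha : a ≠ 0) (hb : b ≠ 0) (hab : a.Coprime b) :
    4 * a * b * (dedekindS a b + dedekindS b a) =
      ((a : ℝ) - 1) * (a - 2) / 3 + ((b : ℝ) - 1) * (b - 2) / 3 - (a - 1) * (b - 1) := by
  have hgrid : ∀ μ ∈ Ico 1 a, ∀ ν ∈ Ico 1 b,
      cot (π * μ / a + π * ν / b) * (cot (π * μ / a) + cot (π * ν / b)) =
        cot (π * μ / a) * cot (π * ν / b) - 1 := by
    intro μ hμ ν hν
    have hμ' := mem_Ico.mp hμ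
    have hν' := mem_Ico.mp hν
    exact cot_add_mul_cot_add_cot (sin_pi_mul_div_ne_zero ha (Nat.not_dvd_of_pos_of_lt hμ'.1 hμ'.2))
      (sin_pi_mul_div_ne_zero hb (Nat.not_dvd_of_pos_of_lt hν'.1 hν'.2))
      (sin_pi_mul_div_add_pi_mul_div_ne_zero ha hb hab hμ ν)
  have hleft : ∑ μ ∈ Ico 1 a, ∑ ν ∈ Ico 1 b, cot (π * μ / a + π * ν / b) * cot (π * μ / a) =
      4 * a * b * dedekindS b a - ((a : ℝ) - 1) * (a - 2) / 3 := by
    rw [← sum_Ico_cot_mul_sum_Ico_cot_add ha hab]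
    exact sum_congr rfl fun μ _ ↦ by rw [mul_sum]; exact sum_congr rfl fun _ _ ↦ mul_comm _ _
  have hright : ∑ μ ∈ Ico 1 a, ∑ ν ∈ Ico 1 b, cot (π * μ / a + π * ν / b) * cot (π * ν / b) =
      4 * b * a * dedekindS a b - ((b : ℝ) - 1) * (b - 2) / 3 := by
    rw [sum_comm, ← sum_Ico_cot_mul_sum_Ico_cot_add hb hab.symm]
    exact sum_congr rfl fun ν _ ↦ by
      rw [mul_sum]; exact sum_congr rfl fun _ _ ↦ by rw [add_comm, mul_comm]
  have hprod : ∑ μ ∈ Ico 1 a, ∑ ν ∈ Ico 1 b, (cot (π * μ / a) * cot (π * ν / b) - 1) =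
      -(((a : ℝ) - 1) * (b - 1)) := by
    simp only [sum_sub_distrib, ← mul_sum, sum_Ico_cot_pi_mul_div, mul_zero, sum_const_zero,
      sum_const, Nat.card_Ico, nsmul_eq_mul, Nat.cast_sub (Nat.one_le_iff_ne_zero.mpr ha),
      Nat.cast_sub (Nat.one_le_iff_ne_zero.mpr hb)]
    push_cast
    ring
  have hsum := sum_congr rfl fun μ hμ ↦ sum_congr rfl (hgrid μ hμ)
  simp only [mul_add, sum_add_distrib, hleft, hright, hprod] at hsum
  linarith

theorem dedekindS_reciprocity (a b : ℕ) (ha : 0 < a) (hb : 0 < b) (hcop : Nat.gcd a b = 1) :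
    dedekindS a b + dedekindS b a =
      -(1 / 4) + ((a : ℝ) ^ 2 + (b : ℝ) ^ 2 + 1) / (12 * a * b) := by
  have h := four_mul_mul_dedekindS_add ha.ne' hb.ne' hcop
  have ha' : (a : ℝ) ≠ 0 := by positivity
  have hb' : (b : ℝ) ≠ 0 := by positivity
  field_simp
  linear_combination 12 * h
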